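/- The clause gadget sub-board has the property that the maximum number of queens that may be legitimately placed within it is five, and five queens are achievable if and only if one queen is placed in each of the three exterior double squares and not all three of the squares labelled F contain queens. In particular, when the truth assignment simulated by the three exterior double squares places queens in all three F-squares (the 'three falses' assignment), at most four queens can be legitimately placed. -/

import Mathlib

open Computability

/-! ### Boards and pieces -/

/-- A rectangular `rows × cols` board.  Square `(i, j)` (for `i < rows`, `j < cols`) is white
iff `white i j = true`; otherwise it is black.  Black squares are walls through which a
piece cannot move. -/
structure ChessBoard where
  rows : ℕ
  cols : ℕ
  white : ℕ → ℕ → Bool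

/-- The square `p` (with integer coordinates) is a white square of the board `B`. -/
def ChessBoard.White (B : ChessBoard) (p : ℤ × ℤ) : Prop :=
  ∃ i j : ℕ, i < B.rows ∧ j < B.cols ∧ p = ((i : ℤ), (j : ℤ)) ∧ B.white i j = true

/-- The eight directions in which a queen (or king) may move. -/
def queenDirs : List (ℤ × ℤ) :=
  [(1, 0), (-1, 0), (0, 1), (0, -1), (1, 1), (1, -1), (-1, 1), (-1, -1)]

/-- A queen on square `p` of board `B` threatens square `q`:  `q` is reached from `p` by
moving some positive number `t` of steps in one of the eight directions, every strictly
intermediate square being a white square of the board (black squares block the move). -/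
def QueenAttacks (B : ChessBoard) (p q : ℤ × ℤ) : Prop :=
  ∃ d ∈ queenDirs, ∃ t : ℕ, 0 < t ∧
    q = (p.1 + (t : ℤ) * d.1, p.2 + (t : ℤ) * d.2) ∧
    ∀ s : ℕ, 0 < s → s < t → B.White (p.1 + (s : ℤ) * d.1, p.2 + (s : ℤ) * d.2)

/-- A queen restricted to move at most two squares:  as `QueenAttacks`, but with `t ≤ 2`. -/
def Queen2Attacks (B : ChessBoard) (p q : ℤ × ℤ) : Prop :=
  ∃ d ∈ queenDirs, ∃ t : ℕ, 0 < t ∧ t ≤ 2 ∧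
    q = (p.1 + (t : ℤ) * d.1, p.2 + (t : ℤ) * d.2) ∧
    ∀ s : ℕ, 0 < s → s < t → B.White (p.1 + (s : ℤ) * d.1, p.2 + (s : ℤ) * d.2)

/-- A king on square `p` threatens square `q`:  `q` is a different square at Chebyshev
distance one from `p` (one step in any of the eight directions). -/
def KingAttacks (p q : ℤ × ℤ) : Prop :=
  p ≠ q ∧ (p.1 - q.1).natAbs ≤ 1 ∧ (p.2 - q.2).natAbs ≤ 1

/-- A legitimate assignment of queens:  all queens on white squares, no queen in a
position to take any other. -/
def LegitimateQueens (B : ChessBoard) (Q : Finset (ℤ × ℤ)) : Prop :=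
  (∀ p ∈ Q, B.White p) ∧ ∀ p ∈ Q, ∀ q ∈ Q, p ≠ q → ¬ QueenAttacks B p q

/-- A legitimate assignment of queens that move at most two squares. -/
def LegitimateQueens2 (B : ChessBoard) (Q : Finset (ℤ × ℤ)) : Prop :=
  (∀ p ∈ Q, B.White p) ∧ ∀ p ∈ Q, ∀ q ∈ Q, p ≠ q → ¬ Queen2Attacks B p q

/-- A legitimate assignment of kings:  all kings on white squares, no king in a position
to take any other. -/
def LegitimateKings (B : ChessBoard) (Q : Finset (ℤ × ℤ)) : Prop :=
  (∀ p ∈ Q, B.White p) ∧ ∀ p ∈ Q, ∀ q ∈ Q, p ≠ q → ¬ KingAttacks p q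

/-- `m` queens can be legitimately placed on the board `B`. -/
def QueensYes (B : ChessBoard) (m : ℕ) : Prop :=
  ∃ Q : Finset (ℤ × ℤ), Q.card = m ∧ LegitimateQueens B Q

/-- `m` two-square-restricted queens can be legitimately placed on the board `B`. -/
def Queens2Yes (B : ChessBoard) (m : ℕ) : Prop :=
  ∃ Q : Finset (ℤ × ℤ), Q.card = m ∧ LegitimateQueens2 B Q

/-- `m` kings can be legitimately placed on the board `B`. -/
def KingsYes (B : ChessBoard) (m : ℕ) : Prop :=
  ∃ Q : Finset (ℤ × ℤ), Q.card = m ∧ LegitimateKings B Q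

/-- The maximum number of queens that can be legitimately placed on `B` is exactly `m`. -/
def MaxQueensIs (B : ChessBoard) (m : ℕ) : Prop :=
  QueensYes B m ∧ ∀ Q : Finset (ℤ × ℤ), LegitimateQueens B Q → Q.card ≤ m

/-- The maximum number of kings that can be legitimately placed on `B` is exactly `m`. -/
def MaxKingsIs (B : ChessBoard) (m : ℕ) : Prop :=
  KingsYes B m ∧ ∀ Q : Finset (ℤ × ℤ), LegitimateKings B Q → Q.card ≤ m

/-- `p` lies in the `16 × 16` square region whose lower corner is `(a, b)`. -/
def InRect16 (a b : ℤ) (p : ℤ × ℤ) : Prop :=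
  a ≤ p.1 ∧ p.1 < a + 16 ∧ b ≤ p.2 ∧ p.2 < b + 16

/-! ### Encodings of instances as bit-strings -/

/-- Encode a list of natural numbers as a bit-string, each number in unary followed by a
`false` separator. -/
def encodeNatList (L : List ℕ) : List Bool :=
  L.flatMap fun n => List.replicate n true ++ [false]

/-- A concrete binary encoding of a board:  the two dimensions in unary, followed by the
colours of the squares row by row. -/
def encodeBoard (B : ChessBoard) : List Bool :=
  List.replicate B.rows true ++ [false] ++ List.replicate B.cols true ++ [false] ++
    ((List.range B.rows).flatMap fun i => (List.range B.cols).map fun j => B.white i j)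

/-- A concrete binary encoding of an instance (board, tariff) of the queens/kings problems. -/
def encodeInstance (B : ChessBoard) (m : ℕ) : List Bool :=
  encodeBoard B ++ [false] ++ List.replicate m true

/-- The language QUEENS:  encodings of pairs (board, tariff `m`) such that `m` queens can
be legitimately placed on the board. -/
def QUEENS : Set (List Bool) :=
  { w | ∃ (B : ChessBoard) (m : ℕ), w = encodeInstance B m ∧ QueensYes B m }

/-- The language QUEENS₂ (queens restricted to move at most two squares). -/
def QUEENS2 : Set (List Bool) :=
  { w | ∃ (B : ChessBoard) (m : ℕ), w = encodeInstance B m ∧ Queens2Yes B m }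

/-- The language KINGS. -/
def KINGS : Set (List Bool) :=
  { w | ∃ (B : ChessBoard) (m : ℕ), w = encodeInstance B m ∧ KingsYes B m }

/-! ### Polynomial time, NP, NP-completeness -/

/-- The trivial finite encoding of bit-strings over the alphabet `Bool`. -/
def listBoolEncoding : Encoding (List Bool) Bool :=
  ⟨id, Option.some, fun _ => rfl⟩

/-- `f` is computable in polynomial time (by a Turing machine). -/
def PolyTimeFun (f : List Bool → List Bool) : Prop :=
  Nonempty (Turing.TM2ComputableInPolyTime listBoolEncoding.encode listBoolEncoding.encode f)

/-- The boolean predicate `D` is decidable in polynomial time. -/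
def PolyTimePred (D : List Bool → Bool) : Prop :=
  PolyTimeFun fun w => [D w]

/-- Polynomial-time many-one reducibility between languages. -/
def ReducesTo (A B : Set (List Bool)) : Prop :=
  ∃ f : List Bool → List Bool, PolyTimeFun f ∧ ∀ w : List Bool, w ∈ A ↔ f w ∈ B

/-- An unambiguous pairing of two bit-strings into one. -/
def pairCode (x y : List Bool) : List Bool :=
  (x.flatMap fun b => [b, b]) ++ [true, false] ++ y

/-- Membership in NP:  there are a polynomial `p` and a polynomial-time verifier `V` such
that `x ∈ A` iff some certificate `c` of length at most `p (|x|)` makes `V` accept. -/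
def InNP (A : Set (List Bool)) : Prop :=
  ∃ (p : Polynomial ℕ) (V : List Bool → Bool), PolyTimePred V ∧
    ∀ x : List Bool, x ∈ A ↔
      ∃ c : List Bool, c.length ≤ p.eval x.length ∧ V (pairCode x c) = true

/-- NP-hardness with respect to polynomial-time many-one reductions. -/
def NPHard (A : Set (List Bool)) : Prop :=
  ∀ B : Set (List Bool), InNP B → ReducesTo B A

/-- NP-completeness with respect to polynomial-time many-one reductions. -/
def NPComplete (A : Set (List Bool)) : Prop :=
  InNP A ∧ NPHard A

/-! ### Planar 3-SAT -/

/-- A CNF formula:  variables are `0, …, numVars - 1`; a literal is a pair (variable,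
polarity); a clause is a list of literals. -/
structure CNF where
  numVars : ℕ
  clauses : List (List (ℕ × Bool))

/-- Satisfiability of a CNF formula. -/
def CNF.Satisfiable (φ : CNF) : Prop :=
  ∃ v : ℕ → Bool, ∀ C ∈ φ.clauses, ∃ l ∈ C, v l.1 = l.2

/-- The incidence graph of a CNF formula:  vertices are the variables (`Sum.inl`) and the
clauses (`Sum.inr`, by index), with an edge joining a variable to each clause in which it
features. -/
def CNF.incidenceGraph (φ : CNF) : SimpleGraph (ℕ ⊕ ℕ) :=
  SimpleGraph.fromRel fun a b =>
    match a, b with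
    | Sum.inl v, Sum.inr c => c < φ.clauses.length ∧ ∃ l ∈ φ.clauses.getD c [], l.1 = v
    | _, _ => False

/-- `H` is a minor of `G`:  there are nonempty, pairwise disjoint, connected branch sets
in `G`, one for each vertex of `H`, with an edge of `G` between the branch sets of any
two adjacent vertices of `H`. -/
def SimpleGraph.IsMinorOf {W V : Type*} (H : SimpleGraph W) (G : SimpleGraph V) : Prop :=
  ∃ f : W → Set V, (∀ w, (f w).Nonempty) ∧ (∀ w, (G.induce (f w)).Connected) ∧
    (∀ w w' : W, w ≠ w' → Disjoint (f w) (f w')) ∧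
    ∀ w w' : W, H.Adj w w' → ∃ a ∈ f w, ∃ b ∈ f w', G.Adj a b

/-- Planarity of a graph, via Wagner's characterisation:  neither `K₅` nor `K₃,₃` is a
minor. -/
def SimpleGraph.Planar {V : Type*} (G : SimpleGraph V) : Prop :=
  ¬ (completeGraph (Fin 5)).IsMinorOf G ∧
    ¬ (completeBipartiteGraph (Fin 3) (Fin 3)).IsMinorOf G

/-- A planar 3-SAT instance:  every clause has at most 3 literals, every literal mentions
a genuine variable, and the incidence graph is planar. -/
def CNF.Planar3 (φ : CNF) : Prop :=
  (∀ C ∈ φ.clauses, C.length ≤ 3) ∧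
    (∀ C ∈ φ.clauses, ∀ l ∈ C, l.1 < φ.numVars) ∧
    φ.incidenceGraph.Planar

/-- Flatten a CNF formula into a list of natural numbers. -/
def CNF.flatten (φ : CNF) : List ℕ :=
  φ.numVars :: φ.clauses.length ::
    φ.clauses.flatMap fun C => C.length :: C.map fun l => 2 * l.1 + (if l.2 then 1 else 0)

/-- A concrete binary encoding of CNF formulas. -/
def encodeCNF (φ : CNF) : List Bool :=
  encodeNatList φ.flatten

/-- The language PLANAR-3-SAT:  encodings of satisfiable planar 3-SAT instances. -/
def PLANARSAT3 : Set (List Bool) :=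
  { w | ∃ φ : CNF, w = encodeCNF φ ∧ φ.Planar3 ∧ φ.Satisfiable }


/-!
The gadget's eleven white squares split into five cliques of mutually attacking squares:
the three double squares, the four squares at the bottom, and the isolated square `(0, 0)`.
A legitimate placement meets each clique at most once, so it has at most five queens, and
five queens put exactly one on each double square. Queens on all three `F`-squares attack
the whole bottom clique, leaving at most four; if some literal is true, the bottom clique
keeps a square that no `F`-queen attacks.
-/

namespace ChessBoard

theorem white_iff (B : ChessBoard) (p : ℤ × ℤ) :
    B.White p ↔ 0 ≤ p.1 ∧ p.1 < B.rows ∧ 0 ≤ p.2 ∧ p.2 < B.cols ∧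
      B.white p.1.toNat p.2.toNat = true := by
  constructor
  · rintro ⟨i, j, hi, hj, rfl, hw⟩
    simpa [hi, hj] using hw
  · rintro ⟨h0, hr, h0', hc, hw⟩
    exact ⟨p.1.toNat, p.2.toNat, by omega, by omega, by ext <;> simp [h0, h0'], hw⟩

instance (B : ChessBoard) : DecidablePred B.White :=
  fun p => decidable_of_iff _ (B.white_iff p).symm

end ChessBoard

instance (p q : ℤ × ℤ) : Decidable (KingAttacks p q) :=
  inferInstanceAs (Decidable (_ ∧ _ ∧ _))

def QueenAttacksWithin (B : ChessBoard) (n : ℕ) (p q : ℤ × ℤ) : Prop :=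
  ∃ d ∈ queenDirs, ∃ t ∈ Finset.Icc 1 n,
    q = (p.1 + (t : ℤ) * d.1, p.2 + (t : ℤ) * d.2) ∧
    ∀ s ∈ Finset.Ico 1 t, B.White (p.1 + (s : ℤ) * d.1, p.2 + (s : ℤ) * d.2)

instance (B : ChessBoard) (n : ℕ) (p q : ℤ × ℤ) :
    Decidable (QueenAttacksWithin B n p q) := by
  unfold QueenAttacksWithin; infer_instance

theorem QueenAttacksWithin.queenAttacks {B : ChessBoard} {n : ℕ} {p q : ℤ × ℤ}
    (h : QueenAttacksWithin B n p q) : QueenAttacks B p q := by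
  obtain ⟨d, hd, t, ht, rfl, hs⟩ := h
  exact ⟨d, hd, t, (Finset.mem_Icc.mp ht).1, rfl,
    fun s hs₀ hst => hs s (Finset.mem_Ico.mpr ⟨hs₀, hst⟩)⟩

theorem queenAttacks_iff_within {B : ChessBoard} {p q : ℤ × ℤ} (hp : B.White p)
    (hq : B.White q) : QueenAttacks B p q ↔ QueenAttacksWithin B (B.rows + B.cols) p q := by
  refine ⟨?_, QueenAttacksWithin.queenAttacks⟩
  rintro ⟨d, hd, t, ht, rfl, hs⟩
  have hp' := (B.white_iff _).mp hp
  have hq' := (B.white_iff _).mp hq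
  have htn : t ≤ B.rows + B.cols := by
    simp only [queenDirs, List.mem_cons, List.not_mem_nil, or_false] at hd
    rcases hd with rfl | rfl | rfl | rfl | rfl | rfl | rfl | rfl <;> simp at hq' <;> omega
  exact ⟨d, hd, t, Finset.mem_Icc.mpr ⟨ht, htn⟩, rfl,
    fun s hs' => hs s (Finset.mem_Ico.mp hs').1 (Finset.mem_Ico.mp hs').2⟩

theorem legitimateQueens_iff (B : ChessBoard) (Q : Finset (ℤ × ℤ)) :
    LegitimateQueens B Q ↔ (∀ p ∈ Q, B.White p) ∧
      ∀ p ∈ Q, ∀ q ∈ Q, p ≠ q → ¬ QueenAttacksWithin B (B.rows + B.cols) p q := by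
  refine and_congr_right fun hW => ?_
  refine forall₂_congr fun p hp => forall₂_congr fun q hq => ?_
  rw [queenAttacks_iff_within (hW p hp) (hW q hq)]

instance (B : ChessBoard) : DecidablePred (LegitimateQueens B) :=
  fun Q => decidable_of_iff _ (legitimateQueens_iff B Q).symm

namespace LegitimateQueens

variable {B : ChessBoard} {Q : Finset (ℤ × ℤ)}

theorem not_mem_of_queenAttacks (hQ : LegitimateQueens B Q) {p q : ℤ × ℤ} (hp : p ∈ Q)
    (hpq : p ≠ q) (h : QueenAttacks B p q) : q ∉ Q :=
  fun hq => hQ.2 p hp q hq hpq h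

theorem card_inter_le_one (hQ : LegitimateQueens B Q) {K : Finset (ℤ × ℤ)}
    (hK : ∀ p ∈ K, ∀ q ∈ K, p ≠ q → QueenAttacks B p q) : (Q ∩ K).card ≤ 1 := by
  refine Finset.card_le_one.mpr fun p hp q hq => ?_
  rw [Finset.mem_inter] at hp hq
  by_contra hpq
  exact hQ.not_mem_of_queenAttacks hp.1 hpq (hK p hp.2 q hq.2 hpq) hq.1

end LegitimateQueens

theorem Finset.card_le_sum_card_inter {α ι : Type*} [DecidableEq α] [Fintype ι]
    {s : Finset α} {K : ι → Finset α} (hs : s ⊆ Finset.univ.biUnion K) :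
    s.card ≤ ∑ i, (s ∩ K i).card := by
  calc s.card = (Finset.univ.biUnion fun i => s ∩ K i).card := by
        rw [← Finset.inter_biUnion, Finset.inter_eq_left.mpr hs]
    _ ≤ ∑ i, (s ∩ K i).card := Finset.card_biUnion_le

theorem Finset.exactly_one_mem_of_card_inter_pair_eq_one {α : Type*} [DecidableEq α]
    {s : Finset α} {a b : α} (hab : a ≠ b) (h : (s ∩ {a, b}).card = 1) :
    (a ∈ s ∧ b ∉ s) ∨ (b ∈ s ∧ a ∉ s) := by
  by_cases ha : a ∈ s <;> by_cases hb : b ∈ s <;>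
    simp_all [Finset.inter_insert_of_mem, Finset.inter_insert_of_notMem,
      Finset.inter_singleton_of_mem, Finset.inter_singleton_of_notMem]

/- The gadget board, rows `0–4` from top to bottom and columns `0–7` from left to right
(`T`, `F` the double squares, `o` the other white squares):
```
o . . . . . . .
. . . . . T . .
. . T . F . . .
. . F . o . F T
. . . o o o . .
```
-/
def gadgetSquares : List (ℤ × ℤ) :=
  [(0, 0), (1, 5), (2, 2), (2, 4), (3, 2), (3, 4), (3, 6), (3, 7), (4, 3), (4, 4), (4, 5)]

def gadget : ChessBoard := ⟨5, 8, fun i j => decide (((i : ℤ), (j : ℤ)) ∈ gadgetSquares)⟩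

def gadgetT : Fin 3 → ℤ × ℤ := ![(2, 2), (1, 5), (3, 7)]

def gadgetF : Fin 3 → ℤ × ℤ := ![(3, 2), (2, 4), (3, 6)]

def gadgetCliques : Fin 5 → Finset (ℤ × ℤ) :=
  ![{gadgetT 0, gadgetF 0}, {gadgetT 1, gadgetF 1}, {gadgetT 2, gadgetF 2},
    {(4, 3), (4, 4), (4, 5), (3, 4)}, {(0, 0)}]

theorem gadget_white_mem_biUnion_cliques (p : ℤ × ℤ) (hp : gadget.White p) :
    p ∈ Finset.univ.biUnion gadgetCliques := by
  obtain ⟨i, j, -, -, rfl, hw⟩ := hp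
  have : ∀ p ∈ gadgetSquares, p ∈ Finset.univ.biUnion gadgetCliques := by decide
  exact this _ (of_decide_eq_true hw)

theorem gadgetCliques_queenAttacks (k : Fin 5) :
    ∀ p ∈ gadgetCliques k, ∀ q ∈ gadgetCliques k, p ≠ q → QueenAttacks gadget p q := by
  have : ∀ p ∈ gadgetCliques k, ∀ q ∈ gadgetCliques k, p ≠ q →
      QueenAttacksWithin gadget 2 p q := by
    revert k; decide
  exact fun p hp q hq hpq => (this p hp q hq hpq).queenAttacks

theorem gadgetF_queenAttacks_clique_three :
    ∀ q ∈ gadgetCliques 3, ∃ i, gadgetF i ≠ q ∧ QueenAttacks gadget (gadgetF i) q := by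
  have : ∀ q ∈ gadgetCliques 3, ∃ i, gadgetF i ≠ q ∧
      QueenAttacksWithin gadget 2 (gadgetF i) q := by
    decide
  exact fun q hq => (this q hq).imp fun _ h => ⟨h.1, h.2.queenAttacks⟩

namespace LegitimateQueens

variable {Q : Finset (ℤ × ℤ)}

theorem gadget_card_le_sum (hQ : LegitimateQueens gadget Q) :
    Q.card ≤ ∑ k, (Q ∩ gadgetCliques k).card :=
  Finset.card_le_sum_card_inter fun p hp => gadget_white_mem_biUnion_cliques p (hQ.1 p hp)

theorem gadget_card_inter_le_one (hQ : LegitimateQueens gadget Q) (k : Fin 5) :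
    (Q ∩ gadgetCliques k).card ≤ 1 :=
  hQ.card_inter_le_one (gadgetCliques_queenAttacks k)

theorem gadget_card_le_five (hQ : LegitimateQueens gadget Q) : Q.card ≤ 5 := by
  have hsum := hQ.gadget_card_le_sum
  have h := hQ.gadget_card_inter_le_one
  rw [Fin.sum_univ_five] at hsum
  linarith [h 0, h 1, h 2, h 3, h 4]

theorem gadget_card_le_four (hQ : LegitimateQueens gadget Q) (hF : ∀ i, gadgetF i ∈ Q) :
    Q.card ≤ 4 := by
  have hsum := hQ.gadget_card_le_sum
  have h := hQ.gadget_card_inter_le_one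
  have h3 : (Q ∩ gadgetCliques 3).card = 0 := by
    refine Finset.card_eq_zero.mpr (Finset.eq_empty_of_forall_notMem fun q hq => ?_)
    obtain ⟨i, hne, hatt⟩ := gadgetF_queenAttacks_clique_three q (Finset.mem_inter.mp hq).2
    exact hQ.not_mem_of_queenAttacks (hF i) hne hatt (Finset.mem_inter.mp hq).1
  rw [Fin.sum_univ_five] at hsum
  linarith [h 0, h 1, h 2, h 4]

theorem gadget_card_inter_double_eq_one (hQ : LegitimateQueens gadget Q) (h5 : Q.card = 5)
    (i : Fin 3) : (Q ∩ {gadgetT i, gadgetF i}).card = 1 := by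
  have hsum := hQ.gadget_card_le_sum
  have h := hQ.gadget_card_inter_le_one
  rw [Fin.sum_univ_five] at hsum
  have := h 0; have := h 1; have := h 2; have := h 3; have := h 4
  fin_cases i
  · change (Q ∩ gadgetCliques 0).card = 1; omega
  · change (Q ∩ gadgetCliques 1).card = 1; omega
  · change (Q ∩ gadgetCliques 2).card = 1; omega

end LegitimateQueens

-- Besides the literal queens, one queen on `(0, 0)` and one on a square of the four-square
-- clique that no `F`-queen attacks.
def gadgetPlacement (a : Fin 3 → Bool) : Finset (ℤ × ℤ) :=
  {(0, 0), if a 0 then (4, 3) else if a 1 then (4, 4) else (4, 5)} ∪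
    Finset.univ.image fun i => if a i then gadgetT i else gadgetF i

theorem gadgetPlacement_spec (a : Fin 3 → Bool) (ha : ∃ i, a i = true) :
    LegitimateQueens gadget (gadgetPlacement a) ∧ (gadgetPlacement a).card = 5 ∧
      ∀ i, if a i then gadgetT i ∈ gadgetPlacement a ∧ gadgetF i ∉ gadgetPlacement a
        else gadgetF i ∈ gadgetPlacement a ∧ gadgetT i ∉ gadgetPlacement a := by
  revert a
  decide

/-- The clause gadget:  a sub-board with three exterior double squares
(each consisting of a T-square `tSq i` and an F-square `fSq i`, adjacent white squares)
such that the maximum number of queens that may be legitimately placed within it is five,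
achievable iff one queen is placed in each of the three exterior double squares and not
all of the three F-squares contain queens; the 'three falses' assignment admits at most
four queens. -/
theorem clause_gadget :
    ∃ (B : ChessBoard) (tSq fSq : Fin 3 → ℤ × ℤ),
      (∀ i, B.White (tSq i)) ∧ (∀ i, B.White (fSq i)) ∧
      (∀ i, tSq i ≠ fSq i) ∧ (∀ i, KingAttacks (tSq i) (fSq i)) ∧
      (∀ i j, i ≠ j → tSq i ≠ tSq j ∧ fSq i ≠ fSq j ∧ tSq i ≠ fSq j) ∧
      MaxQueensIs B 5 ∧
      -- a maximal (5-queen) placement puts exactly one queen in each exterior double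
      -- square, and not all three F-squares contain queens
      (∀ Q : Finset (ℤ × ℤ), LegitimateQueens B Q → Q.card = 5 →
        (∀ i, (tSq i ∈ Q ∧ fSq i ∉ Q) ∨ (fSq i ∈ Q ∧ tSq i ∉ Q)) ∧ ¬ (∀ i, fSq i ∈ Q)) ∧
      -- conversely, every assignment other than three falses extends to a 5-queen placement
      (∀ a : Fin 3 → Bool, (∃ i, a i = true) →
        ∃ Q : Finset (ℤ × ℤ), LegitimateQueens B Q ∧ Q.card = 5 ∧
          ∀ i, if a i then tSq i ∈ Q ∧ fSq i ∉ Q else fSq i ∈ Q ∧ tSq i ∉ Q) ∧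
      -- the 'three falses' assignment admits at most 4 queens
      (∀ Q : Finset (ℤ × ℤ), LegitimateQueens B Q → (∀ i, fSq i ∈ Q) → Q.card ≤ 4) := by
  refine ⟨gadget, gadgetT, gadgetF, by decide, by decide, by decide, by decide, by decide,
    ⟨?_, fun Q hQ => hQ.gadget_card_le_five⟩, fun Q hQ h5 => ⟨fun i => ?_, fun hF => ?_⟩,
    fun a ha => ⟨gadgetPlacement a, gadgetPlacement_spec a ha⟩,
    fun Q hQ hF => hQ.gadget_card_le_four hF⟩
  · obtain ⟨hQ, h5, -⟩ := gadgetPlacement_spec (fun _ => true) ⟨0, rfl⟩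
    exact ⟨_, h5, hQ⟩
  · exact Finset.exactly_one_mem_of_card_inter_pair_eq_one (by revert i; decide)
      (hQ.gadget_card_inter_double_eq_one h5 i)
  · have := hQ.gadget_card_le_four hF
    omega
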